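/- In the combinatorial horoball C_f(Γ) with f(n) = 2^n over a connected graph Γ, for any two vertices (x,0) and (y,0) at graph distance N = d_Γ(x,y) ≥ 1 in Γ, the horoball distance satisfies d_f((x,0),(y,0)) ≥ 2⌊log₂ N⌋ − C for some universal constant C, and d_f((x,0),(y,0)) ≤ 2⌈log₂ N⌉ + 3. -/

import Mathlib

/-!
Along a walk `p` from `u` to `v` in the horoball with scaling `2 ^ n`, put
`m = |p| + u.2 + v.2`. Then `d_Γ(u.1, v.1) + 2 ^ u.2 + 2 ^ v.2 ≤ 2 ^ ⌊m / 2⌋ + 2 ^ ⌈m / 2⌉`,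
by induction on `p`: prepending a step up leaves `m` unchanged, a step down adds `2` to `m` and
doubles the bound, and a horizontal step at level `n` adds `1` to `m`, which raises the bound by
`2 ^ ⌊m / 2⌋ ≥ 2 ^ n`, enough to pay for the `Γ`-length `≤ 2 ^ n` of that step.
For a geodesic of length `L` between level-0 vertices this gives `N < 2 ^ (⌈L / 2⌉ + 1)`.
The upper bound comes from the walk up `⌈log₂ N⌉` levels, across one edge and back down.
-/

/-- The combinatorial horoball over a graph `Γ` with scaling function `f`:
vertices are `V × ℕ`, with vertical edges between consecutive levels and a
horizontal edge at level `n` between `v, w` whenever `Γ.dist v w ≤ f n`. -/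
def horoball {V : Type*} (Γ : SimpleGraph V) (f : ℕ → ℕ) : SimpleGraph (V × ℕ) :=
  SimpleGraph.fromRel (fun a b =>
    (a.1 = b.1 ∧ b.2 = a.2 + 1) ∨ (a.2 = b.2 ∧ Γ.dist a.1 b.1 ≤ f a.2))

open SimpleGraph

def powHalfSum (m : ℕ) : ℕ := 2 ^ (m / 2) + 2 ^ ((m + 1) / 2)

lemma powHalfSum_add_one (m : ℕ) : powHalfSum (m + 1) = powHalfSum m + 2 ^ (m / 2) := by
  have h : (m + 1 + 1) / 2 = m / 2 + 1 := by omega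
  rw [powHalfSum, powHalfSum, h, pow_succ]
  ring

lemma powHalfSum_add_two (m : ℕ) : powHalfSum (m + 2) = 2 * powHalfSum m := by
  rw [powHalfSum_add_one, powHalfSum_add_one, powHalfSum]
  ring

lemma powHalfSum_le (m : ℕ) : powHalfSum m ≤ 2 ^ ((m + 1) / 2 + 1) := by
  have h : 2 ^ (m / 2) ≤ 2 ^ ((m + 1) / 2) := Nat.pow_le_pow_right two_pos (by omega)
  rw [powHalfSum, pow_succ]
  omega

section Horoball

variable {V : Type*} {Γ : SimpleGraph V} {f : ℕ → ℕ}

lemma horoball_adj_cases {a b : V × ℕ} (h : (horoball Γ f).Adj a b) :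
    (a.1 = b.1 ∧ b.2 = a.2 + 1) ∨ (a.1 = b.1 ∧ a.2 = b.2 + 1) ∨
      (a.2 = b.2 ∧ Γ.dist a.1 b.1 ≤ f a.2) := by
  rw [horoball, fromRel_adj] at h
  rcases h with ⟨-, (⟨h1, h2⟩ | ⟨h1, h2⟩) | (⟨h1, h2⟩ | ⟨h1, h2⟩)⟩
  · exact Or.inl ⟨h1, h2⟩
  · exact Or.inr (Or.inr ⟨h1, h2⟩)
  · exact Or.inr (Or.inl ⟨h1.symm, h2⟩)
  · exact Or.inr (Or.inr ⟨h1.symm, by rwa [dist_comm, ← h1]⟩)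

lemma horoball_adj_down (v : V) (n : ℕ) : (horoball Γ f).Adj (v, n + 1) (v, n) := by
  rw [horoball, fromRel_adj]
  exact ⟨by simp, Or.inr (Or.inl ⟨rfl, rfl⟩)⟩

lemma horoball_adj_horizontal {x y : V} {n : ℕ} (hne : x ≠ y) (h : Γ.dist x y ≤ f n) :
    (horoball Γ f).Adj (x, n) (y, n) := by
  rw [horoball, fromRel_adj]
  exact ⟨by simp [hne], Or.inl (Or.inr ⟨rfl, h⟩)⟩

lemma horoball_walk_snd_le {u v : V × ℕ} (p : (horoball Γ f).Walk u v) :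
    u.2 ≤ v.2 + p.length := by
  induction p with
  | nil => simp
  | cons h q ih =>
    rw [Walk.length_cons]
    rcases horoball_adj_cases h with ⟨-, h2⟩ | ⟨-, h2⟩ | ⟨h2, -⟩ <;> omega

lemma horoball_exists_walk_down (v : V) (k : ℕ) :
    ∃ p : (horoball Γ f).Walk (v, k) (v, 0), p.length = k := by
  induction k with
  | zero => exact ⟨Walk.nil, rfl⟩
  | succ n ih =>
    obtain ⟨p, hp⟩ := ih
    exact ⟨Walk.cons (horoball_adj_down v n) p, by simp [hp]⟩

lemma horoball_exists_walk_length_le {x y : V} {k : ℕ} (h : Γ.dist x y ≤ f k) :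
    ∃ p : (horoball Γ f).Walk (x, 0) (y, 0), p.length ≤ 2 * k + 1 := by
  obtain rfl | hne := eq_or_ne x y
  · exact ⟨Walk.nil, by simp⟩
  obtain ⟨px, hpx⟩ := horoball_exists_walk_down (Γ := Γ) (f := f) x k
  obtain ⟨py, hpy⟩ := horoball_exists_walk_down (Γ := Γ) (f := f) y k
  refine ⟨px.reverse.append (Walk.cons (horoball_adj_horizontal hne h) py), ?_⟩
  simp only [Walk.length_append, Walk.length_reverse, Walk.length_cons, hpx, hpy]
  omega

end Horoball

section PowerScaling

variable {V : Type*} {Γ : SimpleGraph V}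

lemma horoball_dist_add_pow_add_pow_le (hc : Γ.Connected) {u v : V × ℕ}
    (p : (horoball Γ (2 ^ ·)).Walk u v) :
    Γ.dist u.1 v.1 + 2 ^ u.2 + 2 ^ v.2 ≤ powHalfSum (p.length + u.2 + v.2) := by
  induction p with
  | @nil a =>
    have h0 : (0 + a.2 + a.2) / 2 = a.2 := by omega
    have h1 : (0 + a.2 + a.2 + 1) / 2 = a.2 := by omega
    rw [dist_self, Walk.length_nil, powHalfSum, h0, h1, zero_add]
  | @cons a w c h q ih =>
    have hlevel := horoball_walk_snd_le q
    rw [Walk.length_cons]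
    rcases horoball_adj_cases h with ⟨h1, h2⟩ | ⟨h1, h2⟩ | ⟨h2, h1⟩
    · have hle : 2 ^ a.2 ≤ 2 ^ w.2 := Nat.pow_le_pow_right two_pos (by omega)
      rw [show q.length + 1 + a.2 + c.2 = q.length + w.2 + c.2 by omega, h1]
      omega
    · have hle : 2 ^ w.2 ≤ powHalfSum (q.length + w.2 + c.2) :=
        le_add_right (Nat.pow_le_pow_right two_pos (by omega))
      rw [show q.length + 1 + a.2 + c.2 = q.length + w.2 + c.2 + 2 by omega,
        powHalfSum_add_two, h1, h2, pow_succ]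
      omega
    · have htri : Γ.dist a.1 c.1 ≤ Γ.dist a.1 w.1 + Γ.dist w.1 c.1 := hc.dist_triangle
      have hle : 2 ^ w.2 ≤ 2 ^ ((q.length + w.2 + c.2) / 2) :=
        Nat.pow_le_pow_right two_pos (by omega)
      rw [show q.length + 1 + a.2 + c.2 = q.length + w.2 + c.2 + 1 by omega,
        powHalfSum_add_one, h2]
      rw [h2] at h1
      omega

lemma two_mul_log_le_horoball_dist_add_one (hc : Γ.Connected) (x y : V) :
    2 * Nat.log 2 (Γ.dist x y) ≤ (horoball Γ (2 ^ ·)).dist (x, 0) (y, 0) + 1 := by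
  obtain ⟨q, -⟩ := horoball_exists_walk_length_le (f := (2 ^ ·))
    (Nat.lt_two_pow_self (n := Γ.dist x y)).le
  obtain ⟨p, hp⟩ := (Walk.reachable q).exists_walk_length_eq_dist
  set L := (horoball Γ (2 ^ ·)).dist (x, 0) (y, 0)
  have hbound : Γ.dist x y + 2 ≤ powHalfSum L := by
    have key := horoball_dist_add_pow_add_pow_le hc p
    simp only [hp, pow_zero, add_zero] at key
    omega
  have hlt : Γ.dist x y < 2 ^ ((L + 1) / 2 + 1) := by
    have := powHalfSum_le L
    omega
  have := Nat.log_lt_of_lt_pow' (Nat.succ_ne_zero _) hlt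
  omega

end PowerScaling

/-- Groves–Manning distance estimate in the horoball with scaling `2^n`:
the distance between level-0 vertices at graph distance `N ≥ 1` is between
`2⌊log₂ N⌋ - C` (for a universal constant `C`) and `2⌈log₂ N⌉ + 3`. -/
theorem horoball_distance_estimate :
    ∃ C : ℕ, ∀ (V : Type) (Γ : SimpleGraph V), Γ.Connected →
      ∀ (x y : V) (N : ℕ), N = Γ.dist x y → 1 ≤ N →
        2 * Nat.log 2 N ≤ (horoball Γ (fun n => 2 ^ n)).dist (x, 0) (y, 0) + C ∧
        (horoball Γ (fun n => 2 ^ n)).dist (x, 0) (y, 0) ≤ 2 * Nat.clog 2 N + 3 := by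
  refine ⟨1, fun V Γ hc x y N hN _ => ?_⟩
  subst hN
  refine ⟨two_mul_log_le_horoball_dist_add_one hc x y, ?_⟩
  obtain ⟨p, hp⟩ := horoball_exists_walk_length_le (Γ := Γ) (f := (2 ^ ·))
    (Nat.le_pow_clog one_lt_two (Γ.dist x y))
  have := (dist_le p).trans hp
  omega
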